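/- Let f : 𝔹ⁿ → 𝔹ⁿ be a Möbius transformation of the unit ball onto itself. Then for all x, y ∈ 𝔹ⁿ, p_{𝔹ⁿ}(x,y)/(1+√(1−p_{𝔹ⁿ}(x,y)²)) ≤ p_{𝔹ⁿ}(f(x),f(y)) ≤ 2·p_{𝔹ⁿ}(x,y)/(1+p_{𝔹ⁿ}(x,y)²). -/

import Mathlib

open Metric Set

noncomputable def pB {n : ℕ} (x y : EuclideanSpace ℝ (Fin n)) : ℝ :=
  dist x y / Real.sqrt (dist x y ^ 2 + 4 * (1 - ‖x‖) * (1 - ‖y‖))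

/-- f preserves the absolute (cross) ratio of quadruples of points of S
(the characteristic property of Möbius transformations). -/
def PreservesCrossRatioOn {n : ℕ} (f : EuclideanSpace ℝ (Fin n) → EuclideanSpace ℝ (Fin n))
    (S : Set (EuclideanSpace ℝ (Fin n))) : Prop :=
  ∀ a ∈ S, ∀ b ∈ S, ∀ c ∈ S, ∀ d ∈ S,
    dist (f a) (f c) * dist (f b) (f d) * (dist a b * dist c d) =
      dist a c * dist b d * (dist (f a) (f b) * dist (f c) (f d))

/-
Writing `ρ` for the hyperbolic distance of the unit ball, the whole argument rests on the invariance
of `sinh² (ρ (x, y) / 2) = |x - y|² / ((1 - |x|²) (1 - |y|²))` under `f`.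

A map preserving absolute cross ratios multiplies distances by a factor `μ a * μ b`. To pin down
`μ`, let points of `f (ball)` run to the ends `±η` of the diameter through `f a`; their preimages
accumulate at two points `β, β'` of the sphere, and the distance formula in the limit reads
`(1 - |f a|²) |β - β'| = 2 μ(a)² |a - β| |a - β'|`. Since inversion about `a` maps the unit sphere
into a sphere of radius `1 / (1 - |a|²)`, the right side is at least `μ(a)² (1 - |a|²) |β - β'|`.
The same argument for `f⁻¹` gives `μ(a)² (1 - |a|²) = 1 - |f a|²`, hence the invariance.

Finally `tanh (ρ / 4) ≤ p ≤ tanh (ρ / 2)`, and the two bounds of the theorem are the increasing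
maps `T ↦ T / (1 + √(1 - T²))` and `U ↦ 2 U / (1 + U²)`, which exchange `tanh (ρ / 2)` and
`tanh (ρ / 4)`.
-/

open Filter Topology
open EuclideanGeometry (inversion dist_inversion_inversion)

/-- With `t = sinh (ρ / 2)`, these are `tanh (ρ / 2)` and `tanh (ρ / 4)`. -/
noncomputable def tanhHalf (t : ℝ) : ℝ := t / √(1 + t ^ 2)

noncomputable def tanhQuarter (t : ℝ) : ℝ := t / (1 + √(1 + t ^ 2))

lemma tanhHalf_le_one (t : ℝ) : tanhHalf t ≤ 1 := by
  have hS : |t| ≤ √(1 + t ^ 2) := Real.abs_le_sqrt (by linarith)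
  exact div_le_one_of_le₀ ((le_abs_self t).trans hS) (Real.sqrt_nonneg _)

lemma tanhQuarter_nonneg {t : ℝ} (ht : 0 ≤ t) : 0 ≤ tanhQuarter t := by
  unfold tanhQuarter; positivity

lemma tanhHalf_div_one_add_sqrt (t : ℝ) :
    tanhHalf t / (1 + √(1 - tanhHalf t ^ 2)) = tanhQuarter t := by
  have hS : 0 < √(1 + t ^ 2) := Real.sqrt_pos.mpr (by positivity)
  have hS2 : √(1 + t ^ 2) ^ 2 = 1 + t ^ 2 := Real.sq_sqrt (by positivity)
  have hrad : 1 - tanhHalf t ^ 2 = (√(1 + t ^ 2))⁻¹ ^ 2 := by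
    rw [tanhHalf, div_pow, hS2, inv_pow, hS2]; field_simp; ring
  rw [hrad, Real.sqrt_sq (by positivity), tanhHalf, tanhQuarter]
  field_simp
  ring

lemma two_mul_tanhQuarter_div (t : ℝ) :
    2 * tanhQuarter t / (1 + tanhQuarter t ^ 2) = tanhHalf t := by
  have hS : 0 < √(1 + t ^ 2) := Real.sqrt_pos.mpr (by positivity)
  have hS2 : √(1 + t ^ 2) ^ 2 = 1 + t ^ 2 := Real.sq_sqrt (by positivity)
  rw [tanhQuarter, tanhHalf, div_eq_div_iff (by positivity) hS.ne']
  field_simp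
  linear_combination t * hS2

lemma tanhHalf_div_sqrt (d : ℝ) {P : ℝ} (hP : 0 < P) :
    tanhHalf (d / √P) = d / √(P + d ^ 2) := by
  have hsP : 0 < √P := Real.sqrt_pos.mpr hP
  have : 1 + (d / √P) ^ 2 = (P + d ^ 2) / P := by
    rw [div_pow, Real.sq_sqrt hP.le]; field_simp
  rw [tanhHalf, this, Real.sqrt_div' _ hP.le, div_div_div_cancel_right₀ hsP.ne']

lemma tanhQuarter_div_sqrt (d : ℝ) {P : ℝ} (hP : 0 < P) :
    tanhQuarter (d / √P) = d / (√P + √(P + d ^ 2)) := by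
  have hsP : 0 < √P := Real.sqrt_pos.mpr hP
  have : 1 + (d / √P) ^ 2 = (P + d ^ 2) / P := by
    rw [div_pow, Real.sq_sqrt hP.le]; field_simp
  rw [tanhQuarter, this, Real.sqrt_div' _ hP.le]
  field_simp

lemma tanhQuarter_le_div_sqrt {d P A : ℝ} (hd : 0 ≤ d) (hP : 0 < P) (hA0 : 0 < A)
    (hA : A ≤ 4 * P) : tanhQuarter (d / √P) ≤ d / √(d ^ 2 + A) := by
  rw [tanhQuarter_div_sqrt d hP]
  refine div_le_div_of_nonneg_left hd (Real.sqrt_pos.mpr (by positivity)) ?_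
  have hmono : √P ≤ √(P + d ^ 2) := Real.sqrt_le_sqrt (by nlinarith)
  rw [Real.sqrt_le_iff]
  refine ⟨by positivity, ?_⟩
  nlinarith [Real.sq_sqrt hP.le, Real.sq_sqrt (by positivity : 0 ≤ P + d ^ 2),
    mul_le_mul_of_nonneg_left hmono (Real.sqrt_nonneg P)]

lemma div_sqrt_le_tanhHalf {d P A : ℝ} (hd : 0 ≤ d) (hP : 0 < P) (hA : P ≤ A) :
    d / √(d ^ 2 + A) ≤ tanhHalf (d / √P) := by
  rw [tanhHalf_div_sqrt d hP]
  exact div_le_div_of_nonneg_left hd (Real.sqrt_pos.mpr (by positivity))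
    (Real.sqrt_le_sqrt (by linarith))

lemma div_one_add_sqrt_one_sub_sq_le {a b : ℝ} (ha : 0 ≤ a) (hab : a ≤ b) :
    a / (1 + √(1 - a ^ 2)) ≤ b / (1 + √(1 - b ^ 2)) := by
  have hsq : √(1 - b ^ 2) ≤ √(1 - a ^ 2) := Real.sqrt_le_sqrt (by nlinarith)
  rw [div_le_div_iff₀ (by positivity) (by positivity)]
  nlinarith [mul_le_mul hab hsq (Real.sqrt_nonneg _) (ha.trans hab)]

lemma two_mul_div_one_add_sq_le {a b : ℝ} (ha : 0 ≤ a) (hab : a ≤ b) (hb : b ≤ 1) :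
    2 * a / (1 + a ^ 2) ≤ 2 * b / (1 + b ^ 2) := by
  rw [div_le_div_iff₀ (by positivity) (by positivity)]
  have hab1 : a * b ≤ 1 := mul_le_one₀ (hab.trans hb) (ha.trans hab) hb
  nlinarith [mul_nonneg (sub_nonneg.mpr hab) (sub_nonneg.mpr hab1)]

lemma mul_div_eq_mul_div_of_cross_mul_eq {X : Type*} {S : Set X} (hS : S.Infinite) {r : X → X → ℝ}
    (hpos : ∀ a ∈ S, ∀ b ∈ S, a ≠ b → 0 < r a b) (hsymm : ∀ a b, r a b = r b a)
    (hcross : ∀ a ∈ S, ∀ b ∈ S, ∀ c ∈ S, ∀ d ∈ S, a ≠ b → c ≠ d → a ≠ c → b ≠ d →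
      r a c * r b d = r a b * r c d)
    {a b c b' c' : X} (ha : a ∈ S) (hb : b ∈ S) (hc : c ∈ S) (hb' : b' ∈ S) (hc' : c' ∈ S)
    (hab : a ≠ b) (hac : a ≠ c) (hbc : b ≠ c) (hab' : a ≠ b') (hac' : a ≠ c') (hbc' : b' ≠ c') :
    r a b * r a c / r b c = r a b' * r a c' / r b' c' := by
  classical
  have step : ∀ {b b' c}, b ∈ S → b' ∈ S → c ∈ S → a ≠ b → a ≠ b' → b ≠ c → b' ≠ c →
      r a b * r a c / r b c = r a b' * r a c / r b' c := by
    intro b b' c hb hb' hc hab hab' hbc hb'c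
    have h := hcross a ha b' hb' b hb c hc hab' hbc hab hb'c
    have := hpos b hb c hc hbc
    have := hpos b' hb' c hc hb'c
    field_simp
    linear_combination r a c * h
  have comm : ∀ b c, r a b * r a c / r b c = r a c * r a b / r c b := fun b c => by
    rw [hsymm b c, mul_comm]
  -- Pass through a point `e` distinct from all the others, so that every step is legitimate.
  obtain ⟨e, he, heF⟩ := hS.exists_notMem_finset {a, b, c, b', c'}
  simp only [Finset.mem_insert, Finset.mem_singleton, not_or] at heF
  obtain ⟨hea, heb, hec, heb', hec'⟩ := heF
  calc r a b * r a c / r b c = r a e * r a c / r e c := step hb he hc hab (Ne.symm hea) hbc hec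
    _ = r a c * r a e / r c e := comm e c
    _ = r a c' * r a e / r c' e := step hc hc' he hac hac' (Ne.symm hec) (Ne.symm hec')
    _ = r a e * r a c' / r e c' := comm c' e
    _ = r a b' * r a c' / r b' c' := (step hb' he hc' hab' (Ne.symm hea) hbc' hec').symm

lemma exists_eq_mul_of_cross_mul_eq {X : Type*} {S : Set X} (hS : S.Infinite) {r : X → X → ℝ}
    (hpos : ∀ a ∈ S, ∀ b ∈ S, a ≠ b → 0 < r a b) (hsymm : ∀ a b, r a b = r b a)
    (hcross : ∀ a ∈ S, ∀ b ∈ S, ∀ c ∈ S, ∀ d ∈ S, a ≠ b → c ≠ d → a ≠ c → b ≠ d →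
      r a c * r b d = r a b * r c d) :
    ∃ μ : X → ℝ, (∀ a ∈ S, 0 < μ a) ∧ ∀ a ∈ S, ∀ b ∈ S, a ≠ b → r a b = μ a * μ b := by
  classical
  have hpair : ∀ a, ∃ b c, b ∈ S ∧ c ∈ S ∧ a ≠ b ∧ a ≠ c ∧ b ≠ c := by
    intro a
    obtain ⟨b, hb, hbF⟩ := hS.exists_notMem_finset {a}
    obtain ⟨c, hc, hcF⟩ := hS.exists_notMem_finset {a, b}
    simp only [Finset.mem_insert, Finset.mem_singleton, not_or] at hbF hcF
    exact ⟨b, c, hb, hc, Ne.symm hbF, Ne.symm hcF.1, Ne.symm hcF.2⟩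
  choose p q hp hq hap haq hpq using hpair
  refine ⟨fun a => √(r a (p a) * r a (q a) / r (p a) (q a)), fun a ha => ?_,
    fun a ha b hb hab => ?_⟩
  · exact Real.sqrt_pos.mpr (div_pos (mul_pos (hpos a ha _ (hp a) (hap a))
      (hpos a ha _ (hq a) (haq a))) (hpos _ (hp a) _ (hq a) (hpq a)))
  obtain ⟨c, hc, hcF⟩ := hS.exists_notMem_finset {a, b}
  simp only [Finset.mem_insert, Finset.mem_singleton, not_or] at hcF
  have hac : a ≠ c := Ne.symm hcF.1
  have hbc : b ≠ c := Ne.symm hcF.2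
  have hrab := hpos a ha b hb hab
  have := hpos a ha c hc hac
  have := hpos b hb c hc hbc
  dsimp only
  rw [mul_div_eq_mul_div_of_cross_mul_eq hS hpos hsymm hcross ha (hp a) (hq a) hb hc (hap a) (haq a)
      (hpq a) hab hac hbc,
    mul_div_eq_mul_div_of_cross_mul_eq hS hpos hsymm hcross hb (hp b) (hq b) ha hc (hap b) (haq b)
      (hpq b) (Ne.symm hab) hbc hac,
    ← Real.sqrt_mul (by positivity), hsymm b a,
    show r a b * r a c / r b c * (r a b * r b c / r a c) = r a b ^ 2 by field_simp,
    Real.sqrt_sq hrab.le]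

lemma continuousOn_of_dist_eq_mul {X Y : Type*} [MetricSpace X] [PseudoMetricSpace Y]
    {f : X → Y} {μ : X → ℝ} {S : Set X} (hS : S.Nontrivial) (hbdd : Bornology.IsBounded (f '' S))
    (hμ : ∀ a ∈ S, 0 < μ a) (hdist : ∀ a ∈ S, ∀ b ∈ S, dist (f a) (f b) = μ a * μ b * dist a b) :
    ContinuousOn f S := by
  intro β hβ
  obtain ⟨c, hc, hcβ⟩ := hS.exists_ne β
  obtain ⟨D, hD⟩ := isBounded_iff.mp hbdd
  set δ := dist c β / 2 with hδdef
  have hδ : 0 < δ := half_pos (dist_pos.mpr hcβ)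
  -- Near `β` the factor `μ` is bounded, because `f` moves `c` only a bounded distance.
  have hbound : ∀ a ∈ S, dist a β < δ →
      dist (f a) (f β) ≤ D * μ β / (μ c * δ) * dist a β := by
    intro a ha haβ
    have hac : δ ≤ dist a c := by
      linarith [dist_triangle_left c β a]
    have hμa : μ a * (μ c * δ) ≤ D := by
      calc μ a * (μ c * δ) ≤ μ a * μ c * dist a c := by
            rw [← mul_assoc]; gcongr; exact (mul_pos (hμ a ha) (hμ c hc)).le
        _ = dist (f a) (f c) := (hdist a ha c hc).symm
        _ ≤ D := hD (mem_image_of_mem f ha) (mem_image_of_mem f hc)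
    rw [hdist a ha β hβ, div_mul_eq_mul_div, le_div_iff₀ (mul_pos (hμ c hc) hδ)]
    have := hμ β hβ
    nlinarith [mul_le_mul_of_nonneg_right hμa (mul_nonneg this.le (dist_nonneg : 0 ≤ dist a β))]
  have hlim : Tendsto (fun a => D * μ β / (μ c * δ) * dist a β) (𝓝 β) (𝓝 0) := by
    simpa using ((continuous_id.dist (continuous_const (y := β))).tendsto β).const_mul
      (D * μ β / (μ c * δ))
  rw [ContinuousWithinAt, tendsto_iff_dist_tendsto_zero]
  refine squeeze_zero' (Eventually.of_forall fun _ => dist_nonneg) ?_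
    (hlim.mono_left nhdsWithin_le_nhds)
  filter_upwards [inter_mem_nhdsWithin S (ball_mem_nhds β hδ)] with a ha
  exact hbound a ha.1 ha.2

lemma exists_seq_tendsto_of_mem_closure_image {X Y : Type*} [TopologicalSpace X]
    [FirstCountableTopology X] [TopologicalSpace Y] [FrechetUrysohnSpace Y] {f : X → Y}
    {s : Set X} (hs : IsCompact (closure s)) {y : Y} (hy : y ∈ closure (f '' s)) :
    ∃ (b : ℕ → X) (β : X), (∀ k, b k ∈ s) ∧ β ∈ closure s ∧ Tendsto b atTop (𝓝 β) ∧
      Tendsto (f ∘ b) atTop (𝓝 y) := by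
  obtain ⟨u, hu, hlim⟩ := mem_closure_iff_seq_limit.mp hy
  choose b hb hfb using hu
  obtain ⟨β, hβ, φ, hφ, hbφ⟩ := hs.tendsto_subseq fun k => subset_closure (hb k)
  refine ⟨b ∘ φ, β, fun k => hb (φ k), hβ, hbφ, ?_⟩
  rw [← Function.comp_assoc, show f ∘ b = u from funext hfb]
  exact hlim.comp hφ.tendsto_atTop

lemma ContinuousOn.notMem_of_tendsto_comp {X Y : Type*} [TopologicalSpace X] [TopologicalSpace Y]
    [T2Space Y] {f : X → Y} {s : Set X} {t : Set Y} (hf : ContinuousOn f s) (hmaps : MapsTo f s t)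
    {b : ℕ → X} (hb : ∀ k, b k ∈ s) {β : X} {y : Y} (hbβ : Tendsto b atTop (𝓝 β))
    (hfb : Tendsto (f ∘ b) atTop (𝓝 y)) (hy : y ∉ t) : β ∉ s := by
  intro hβ
  have hlim : Tendsto (f ∘ b) atTop (𝓝 (f β)) :=
    (hf β hβ).tendsto.comp (tendsto_nhdsWithin_iff.mpr ⟨hbβ, Eventually.of_forall hb⟩)
  exact hy (tendsto_nhds_unique hfb hlim ▸ hmaps hβ)

lemma dist_mul_dist_mul_dist_eq_of_tendsto {X Y : Type*} [PseudoMetricSpace X]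
    [PseudoMetricSpace Y] {f : X → Y} {μ : X → ℝ} {S : Set X}
    (hdist : ∀ a ∈ S, ∀ b ∈ S, dist (f a) (f b) = μ a * μ b * dist a b) {a : X} (ha : a ∈ S)
    {b : ℕ → X × X} (hb : ∀ k, b k ∈ S ×ˢ S) {β β' : X} {ξ ξ' : Y}
    (hbβ : Tendsto b atTop (𝓝 (β, β'))) (hfb : Tendsto (Prod.map f f ∘ b) atTop (𝓝 (ξ, ξ'))) :
    dist (f a) ξ * dist (f a) ξ' * dist β β' = μ a ^ 2 * (dist a β * dist a β') * dist ξ ξ' := by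
  have key : ∀ k, dist (f a) (f (b k).1) * dist (f a) (f (b k).2) * dist (b k).1 (b k).2 =
      μ a ^ 2 * (dist a (b k).1 * dist a (b k).2) * dist (f (b k).1) (f (b k).2) := fun k => by
    rw [hdist a ha _ (hb k).1, hdist a ha _ (hb k).2, hdist _ (hb k).1 _ (hb k).2]; ring
  have h1 : Tendsto (fun k => f (b k).1) atTop (𝓝 ξ) := hfb.fst_nhds
  have h2 : Tendsto (fun k => f (b k).2) atTop (𝓝 ξ') := hfb.snd_nhds
  refine tendsto_nhds_unique (((tendsto_const_nhds.dist h1).mul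
    (tendsto_const_nhds.dist h2)).mul (hbβ.fst_nhds.dist hbβ.snd_nhds)) ?_
  simp_rw [key]
  exact (tendsto_const_nhds.mul ((tendsto_const_nhds.dist hbβ.fst_nhds).mul
    (tendsto_const_nhds.dist hbβ.snd_nhds))).mul (h1.dist h2)

lemma exists_norm_eq_one_and_eq_norm_smul {E : Type*} [NormedAddCommGroup E] [NormedSpace ℝ E]
    [Nontrivial E] (v : E) :
    ∃ η : E, ‖η‖ = 1 ∧ v = ‖v‖ • η := by
  by_cases h : v = 0
  · obtain ⟨η, hη⟩ := exists_norm_eq E zero_le_one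
    exact ⟨η, hη, by simp [h]⟩
  · refine ⟨‖v‖⁻¹ • v, by simp [norm_smul, h], ?_⟩
    rw [smul_smul, mul_inv_cancel₀ (norm_ne_zero_iff.mpr h), one_smul]

lemma exists_seq_tendsto_sphere {E : Type*} [NormedAddCommGroup E] [NormedSpace ℝ E]
    [ProperSpace E] {f : E → E}
    (hcont : ContinuousOn f (ball 0 1)) (hmaps : MapsTo f (ball 0 1) (ball 0 1))
    (hsurj : SurjOn f (ball 0 1) (ball 0 1)) {ξ ξ' : E} (hξ : ‖ξ‖ = 1) (hξ' : ‖ξ'‖ = 1) :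
    ∃ (b : ℕ → E × E) (β β' : E), (∀ k, b k ∈ ball (0 : E) 1 ×ˢ ball (0 : E) 1) ∧
      ‖β‖ = 1 ∧ ‖β'‖ = 1 ∧ Tendsto b atTop (𝓝 (β, β')) ∧
      Tendsto (Prod.map f f ∘ b) atTop (𝓝 (ξ, ξ')) := by
  have hclosure :
      closure (ball (0 : E) 1 ×ˢ ball (0 : E) 1) = closedBall 0 1 ×ˢ closedBall 0 1 := by
    rw [closure_prod_eq, closure_ball _ one_ne_zero]
  obtain ⟨b, ⟨β, β'⟩, hb, hβ, hbβ, hfb⟩ :=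
    exists_seq_tendsto_of_mem_closure_image (f := Prod.map f f) (y := (ξ, ξ'))
      (hclosure ▸ (isCompact_closedBall 0 1).prod (isCompact_closedBall 0 1))
      (by rw [prodMap_image_prod, hsurj.image_eq_of_mapsTo hmaps, hclosure]; simp [hξ, hξ'])
  rw [hclosure] at hβ
  have hβ1 := hcont.notMem_of_tendsto_comp hmaps (fun k => (hb k).1) hbβ.fst_nhds hfb.fst_nhds
    (by simp [hξ])
  have hβ'1 := hcont.notMem_of_tendsto_comp hmaps (fun k => (hb k).2) hbβ.snd_nhds hfb.snd_nhds
    (by simp [hξ'])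
  simp only [mem_ball_zero_iff, not_lt] at hβ1 hβ'1
  exact ⟨b, β, β', hb, le_antisymm (mem_closedBall_zero_iff.mp hβ.1) hβ1,
    le_antisymm (mem_closedBall_zero_iff.mp hβ.2) hβ'1, hbβ, hfb⟩

/-- `sinh (ρ / 2)` for the hyperbolic distance `ρ` of the unit ball. -/
noncomputable def sinhHalfDist {E : Type*} [NormedAddCommGroup E] (x y : E) : ℝ :=
  dist x y / √((1 - ‖x‖ ^ 2) * (1 - ‖y‖ ^ 2))

lemma sinhHalfDist_nonneg {E : Type*} [NormedAddCommGroup E] (x y : E) : 0 ≤ sinhHalfDist x y := by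
  unfold sinhHalfDist; positivity

section UnitBall

variable {E : Type*} [NormedAddCommGroup E] [InnerProductSpace ℝ E]

lemma mapsTo_inversion_sphere {a : E} (ha : ‖a‖ < 1) :
    MapsTo (inversion a 1) (sphere 0 1)
      (sphere ((1 - ‖a‖ ^ 2)⁻¹ • a + a) (1 - ‖a‖ ^ 2)⁻¹) := by
  intro β hβ
  rw [mem_sphere_zero_iff_norm] at hβ
  have hk : 0 < 1 - ‖a‖ ^ 2 := by nlinarith [norm_nonneg a]
  have hxn : 0 < ‖β - a‖ := norm_pos_iff.mpr (sub_ne_zero.mpr (by rintro rfl; linarith))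
  have hinner : 2 * inner ℝ a (β - a) = 1 - ‖a‖ ^ 2 - ‖β - a‖ ^ 2 := by
    have := norm_add_sq_real a (β - a)
    rw [add_sub_cancel, hβ] at this
    linarith
  have hsq :
      ‖(1 / ‖β - a‖) ^ 2 • (β - a) - (1 - ‖a‖ ^ 2)⁻¹ • a‖ ^ 2 = ((1 - ‖a‖ ^ 2)⁻¹) ^ 2 := by
    rw [norm_sub_sq_real, norm_smul, norm_smul, real_inner_smul_left, real_inner_smul_right,
      real_inner_comm, Real.norm_eq_abs, Real.norm_eq_abs, abs_of_pos (by positivity),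
      abs_of_pos (by positivity)]
    field_simp
    linear_combination (‖a‖ ^ 2 - 1) * hinner
  rw [mem_sphere, inversion, vsub_eq_sub, vadd_eq_add, dist_eq_norm, dist_eq_norm,
    add_sub_add_right_eq_sub]
  exact (pow_left_inj₀ (norm_nonneg _) (by positivity) two_ne_zero).mp hsq

lemma one_sub_norm_sq_mul_dist_le {a β β' : E} (ha : ‖a‖ < 1) (hβ : ‖β‖ = 1) (hβ' : ‖β'‖ = 1) :
    (1 - ‖a‖ ^ 2) * dist β β' ≤ 2 * (dist a β * dist a β') := by
  have hk : 0 < 1 - ‖a‖ ^ 2 := by nlinarith [norm_nonneg a]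
  have hne : ∀ {γ : E}, ‖γ‖ = 1 → γ ≠ a := by
    rintro γ hγ rfl; linarith
  have hpos : 0 < dist β a * dist β' a :=
    mul_pos (dist_pos.mpr (hne hβ)) (dist_pos.mpr (hne hβ'))
  have hsph := mapsTo_inversion_sphere ha
  have hdiam :=
    dist_triangle_right (inversion a 1 β) (inversion a 1 β') ((1 - ‖a‖ ^ 2)⁻¹ • a + a)
  rw [dist_inversion_inversion (hne hβ) (hne hβ'),
    mem_sphere.mp (hsph (mem_sphere_zero_iff_norm.mpr hβ)),
    mem_sphere.mp (hsph (mem_sphere_zero_iff_norm.mpr hβ')), one_pow, div_mul_eq_mul_div, one_mul,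
    div_le_iff₀ hpos] at hdiam
  rw [dist_comm a β, dist_comm a β']
  calc (1 - ‖a‖ ^ 2) * dist β β'
      ≤ (1 - ‖a‖ ^ 2) * (((1 - ‖a‖ ^ 2)⁻¹ + (1 - ‖a‖ ^ 2)⁻¹) * (dist β a * dist β' a)) := by
        gcongr
    _ = 2 * (dist β a * dist β' a) := by field_simp; ring

lemma sq_mul_one_sub_norm_sq_le [ProperSpace E] [Nontrivial E] {f : E → E} {μ : E → ℝ}
    (hmaps : MapsTo f (ball 0 1) (ball 0 1)) (hsurj : SurjOn f (ball 0 1) (ball 0 1))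
    (hμ : ∀ a ∈ ball (0 : E) 1, 0 < μ a)
    (hdist : ∀ a ∈ ball (0 : E) 1, ∀ b ∈ ball (0 : E) 1, dist (f a) (f b) = μ a * μ b * dist a b)
    {a : E} (ha : a ∈ ball 0 1) : μ a ^ 2 * (1 - ‖a‖ ^ 2) ≤ 1 - ‖f a‖ ^ 2 := by
  have hcont : ContinuousOn f (ball 0 1) :=
    continuousOn_of_dist_eq_mul (infinite_of_mem_nhds 0 (ball_mem_nhds 0 one_pos)).nontrivial
      (isBounded_ball.subset hmaps.image_subset) hμ hdist
  obtain ⟨η, hη, hfa⟩ := exists_norm_eq_one_and_eq_norm_smul (f a)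
  obtain ⟨b, β, β', hb, hβ, hβ', hbβ, hfb⟩ :=
    exists_seq_tendsto_sphere hcont hmaps hsurj hη (by rwa [norm_neg])
  have hrel := dist_mul_dist_mul_dist_eq_of_tendsto hdist ha hb hbβ hfb
  have hs : ‖f a‖ < 1 := mem_ball_zero_iff.mp (hmaps ha)
  set s := ‖f a‖
  have hd1 : dist (f a) η = 1 - s := by
    rw [dist_eq_norm, hfa, show s • η - η = (s - 1) • η by module, norm_smul, hη,
      Real.norm_eq_abs, abs_of_neg (by linarith)]
    ring
  have hd2 : dist (f a) (-η) = 1 + s := by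
    rw [dist_eq_norm, hfa, show s • η - -η = (s + 1) • η by module, norm_smul, hη,
      Real.norm_eq_abs, abs_of_nonneg (by positivity)]
    ring
  have hd3 : dist η (-η) = 2 := by
    rw [dist_eq_norm, sub_neg_eq_add, ← two_smul ℝ, norm_smul, hη]; norm_num
  rw [hd1, hd2, hd3] at hrel
  have ha1 : ‖a‖ < 1 := mem_ball_zero_iff.mp ha
  have haβ : a ≠ β := by rintro rfl; linarith
  rcases eq_or_ne β β' with rfl | hββ'
  · have : 0 < μ a ^ 2 * (dist a β * dist a β) * 2 := by
      have := hμ a ha; have := dist_pos.mpr haβ; positivity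
    simp only [dist_self, mul_zero] at hrel
    linarith
  · refine le_of_mul_le_mul_right ?_ (dist_pos.mpr hββ')
    nlinarith [mul_le_mul_of_nonneg_left (one_sub_norm_sq_mul_dist_le ha1 hβ hβ')
      (sq_nonneg (μ a))]

lemma sq_mul_one_sub_norm_sq_eq [ProperSpace E] [Nontrivial E] {f : E → E} {μ : E → ℝ}
    (hf : BijOn f (ball 0 1) (ball 0 1)) (hμ : ∀ a ∈ ball (0 : E) 1, 0 < μ a)
    (hdist : ∀ a ∈ ball (0 : E) 1, ∀ b ∈ ball (0 : E) 1, dist (f a) (f b) = μ a * μ b * dist a b)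
    {a : E} (ha : a ∈ ball 0 1) : μ a ^ 2 * (1 - ‖a‖ ^ 2) = 1 - ‖f a‖ ^ 2 := by
  refine le_antisymm (sq_mul_one_sub_norm_sq_le hf.mapsTo hf.surjOn hμ hdist ha) ?_
  set g := Function.invFunOn f (ball (0 : E) 1)
  have hinv : InvOn g f (ball 0 1) (ball 0 1) := hf.invOn_invFunOn
  have hg : BijOn g (ball 0 1) (ball 0 1) := BijOn.symm hinv.symm hf
  have hdist_g : ∀ u ∈ ball (0 : E) 1, ∀ v ∈ ball (0 : E) 1,
      dist (g u) (g v) = (μ (g u))⁻¹ * (μ (g v))⁻¹ * dist u v := by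
    intro u hu v hv
    have := hμ _ (hg.mapsTo hu)
    have := hμ _ (hg.mapsTo hv)
    rw [← hinv.2 hu, ← hinv.2 hv, hdist _ (hg.mapsTo hu) _ (hg.mapsTo hv), hinv.2 hu, hinv.2 hv]
    field_simp
  have hle := sq_mul_one_sub_norm_sq_le hg.mapsTo hg.surjOn
    (fun u hu => inv_pos.mpr (hμ _ (hg.mapsTo hu))) hdist_g (hf.mapsTo ha)
  rw [hinv.1 ha] at hle
  have := hμ a ha
  calc 1 - ‖f a‖ ^ 2 = μ a ^ 2 * ((μ a)⁻¹ ^ 2 * (1 - ‖f a‖ ^ 2)) := by field_simp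
    _ ≤ μ a ^ 2 * (1 - ‖a‖ ^ 2) := by gcongr

lemma sinhHalfDist_map [ProperSpace E] [Nontrivial E] {f : E → E} {μ : E → ℝ}
    (hf : BijOn f (ball 0 1) (ball 0 1)) (hμ : ∀ a ∈ ball (0 : E) 1, 0 < μ a)
    (hdist : ∀ a ∈ ball (0 : E) 1, ∀ b ∈ ball (0 : E) 1, dist (f a) (f b) = μ a * μ b * dist a b)
    {x y : E} (hx : x ∈ ball 0 1) (hy : y ∈ ball 0 1) :
    sinhHalfDist (f x) (f y) = sinhHalfDist x y := by
  have := hμ x hx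
  have := hμ y hy
  rw [sinhHalfDist, sinhHalfDist, hdist x hx y hy, ← sq_mul_one_sub_norm_sq_eq hf hμ hdist hx,
    ← sq_mul_one_sub_norm_sq_eq hf hμ hdist hy,
    show μ x ^ 2 * (1 - ‖x‖ ^ 2) * (μ y ^ 2 * (1 - ‖y‖ ^ 2)) =
      (μ x * μ y) ^ 2 * ((1 - ‖x‖ ^ 2) * (1 - ‖y‖ ^ 2)) by ring,
    Real.sqrt_mul (by positivity), Real.sqrt_sq (by positivity),
    mul_div_mul_left _ _ (by positivity)]

end UnitBall

lemma PreservesCrossRatioOn.exists_dist_eq_mul {n : ℕ}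
    {f : EuclideanSpace ℝ (Fin n) → EuclideanSpace ℝ (Fin n)} {S : Set (EuclideanSpace ℝ (Fin n))}
    (hmob : PreservesCrossRatioOn f S) (hinj : InjOn f S) (hS : S.Infinite) :
    ∃ μ : EuclideanSpace ℝ (Fin n) → ℝ, (∀ a ∈ S, 0 < μ a) ∧
      ∀ a ∈ S, ∀ b ∈ S, dist (f a) (f b) = μ a * μ b * dist a b := by
  obtain ⟨μ, hμ, hr⟩ :=
    exists_eq_mul_of_cross_mul_eq hS (r := fun a b => dist (f a) (f b) / dist a b)
      (fun a ha b hb hab => div_pos (dist_pos.mpr (hinj.ne ha hb hab)) (dist_pos.mpr hab))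
      (fun a b => by rw [dist_comm a b, dist_comm (f a)])
      (fun a ha b hb c hc d hd hab hcd hac hbd => by
        have := dist_pos.mpr hab
        have := dist_pos.mpr hcd
        have := dist_pos.mpr hac
        have := dist_pos.mpr hbd
        field_simp
        linear_combination hmob a ha b hb c hc d hd)
  refine ⟨μ, hμ, fun a ha b hb => ?_⟩
  rcases eq_or_ne a b with rfl | hab
  · simp
  · rw [← hr a ha b hb hab, div_mul_cancel₀ _ (dist_ne_zero.mpr hab)]

lemma pB_mem_Icc {n : ℕ} {x y : EuclideanSpace ℝ (Fin n)} (hx : x ∈ ball 0 1)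
    (hy : y ∈ ball 0 1) :
    pB x y ∈ Icc (tanhQuarter (sinhHalfDist x y)) (tanhHalf (sinhHalfDist x y)) := by
  have hx1 : ‖x‖ < 1 := mem_ball_zero_iff.mp hx
  have hy1 : ‖y‖ < 1 := mem_ball_zero_iff.mp hy
  have hu : 0 < (1 - ‖x‖) * (1 - ‖y‖) := mul_pos (by linarith) (by linarith)
  have hw1 : 1 ≤ (1 + ‖x‖) * (1 + ‖y‖) := by nlinarith [norm_nonneg x, norm_nonneg y]
  have hw4 : (1 + ‖x‖) * (1 + ‖y‖) ≤ 4 := by nlinarith [norm_nonneg x, norm_nonneg y]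
  have hP : (1 - ‖x‖ ^ 2) * (1 - ‖y‖ ^ 2) =
      (1 - ‖x‖) * (1 - ‖y‖) * ((1 + ‖x‖) * (1 + ‖y‖)) := by
    ring
  exact ⟨tanhQuarter_le_div_sqrt dist_nonneg (by rw [hP]; positivity) (by positivity)
      (by rw [hP]; nlinarith),
    div_sqrt_le_tanhHalf dist_nonneg (by rw [hP]; positivity) (by rw [hP]; nlinarith)⟩

theorem stmt19_general {n : ℕ} (f : EuclideanSpace ℝ (Fin n) → EuclideanSpace ℝ (Fin n))
    (hf : Set.BijOn f (Metric.ball (0 : EuclideanSpace ℝ (Fin n)) 1)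
      (Metric.ball (0 : EuclideanSpace ℝ (Fin n)) 1))
    (hmob : PreservesCrossRatioOn f (Metric.ball (0 : EuclideanSpace ℝ (Fin n)) 1))
    (x y : EuclideanSpace ℝ (Fin n))
    (hx : x ∈ Metric.ball (0 : EuclideanSpace ℝ (Fin n)) 1)
    (hy : y ∈ Metric.ball (0 : EuclideanSpace ℝ (Fin n)) 1) :
    pB x y / (1 + Real.sqrt (1 - pB x y ^ 2)) ≤ pB (f x) (f y) ∧
    pB (f x) (f y) ≤ 2 * pB x y / (1 + pB x y ^ 2) := by
  rcases Nat.eq_zero_or_pos n with rfl | hn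
  · obtain rfl : x = y := Subsingleton.elim x y
    simp [pB]
  have : Nonempty (Fin n) := ⟨⟨0, hn⟩⟩
  obtain ⟨μ, hμ, hdist⟩ := hmob.exists_dist_eq_mul hf.injOn
    (infinite_of_mem_nhds 0 (ball_mem_nhds 0 one_pos))
  obtain ⟨hlo, hhi⟩ := pB_mem_Icc hx hy
  obtain ⟨hlo', hhi'⟩ := pB_mem_Icc (hf.mapsTo hx) (hf.mapsTo hy)
  rw [sinhHalfDist_map hf hμ hdist hx hy] at hlo' hhi'
  set t := sinhHalfDist x y
  have hq : 0 ≤ tanhQuarter t := tanhQuarter_nonneg (sinhHalfDist_nonneg x y)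
  constructor
  · calc pB x y / (1 + √(1 - pB x y ^ 2))
        ≤ tanhHalf t / (1 + √(1 - tanhHalf t ^ 2)) :=
          div_one_add_sqrt_one_sub_sq_le (hq.trans hlo) hhi
      _ = tanhQuarter t := tanhHalf_div_one_add_sqrt t
      _ ≤ pB (f x) (f y) := hlo'
  · calc pB (f x) (f y) ≤ tanhHalf t := hhi'
      _ = 2 * tanhQuarter t / (1 + tanhQuarter t ^ 2) := (two_mul_tanhQuarter_div t).symm
      _ ≤ 2 * pB x y / (1 + pB x y ^ 2) :=
          two_mul_div_one_add_sq_le hq hlo (hhi.trans (tanhHalf_le_one t))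

theorem stmt19 {n : ℕ} (f : EuclideanSpace ℝ (Fin n) → EuclideanSpace ℝ (Fin n))
    (hf : Set.BijOn f (Metric.ball (0 : EuclideanSpace ℝ (Fin n)) 1)
      (Metric.ball (0 : EuclideanSpace ℝ (Fin n)) 1))
    (hfc : ContinuousOn f (Metric.ball (0 : EuclideanSpace ℝ (Fin n)) 1))
    (hmob : PreservesCrossRatioOn f (Metric.ball (0 : EuclideanSpace ℝ (Fin n)) 1))
    (x y : EuclideanSpace ℝ (Fin n))
    (hx : x ∈ Metric.ball (0 : EuclideanSpace ℝ (Fin n)) 1)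
    (hy : y ∈ Metric.ball (0 : EuclideanSpace ℝ (Fin n)) 1) :
    pB x y / (1 + Real.sqrt (1 - pB x y ^ 2)) ≤ pB (f x) (f y) ∧
    pB (f x) (f y) ≤ 2 * pB x y / (1 + pB x y ^ 2) :=
  stmt19_general f hf hmob x y hx hy
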